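/- The pushforward of the measure α·d (density 2(Im u)² with respect to Haar measure on the unit circle) under the map u ↦ u + u⁻¹ = 2·Re(u) is the standard semicircle distribution on [-2, 2]. -/

import Mathlib

open MeasureTheory Complex Real

/-- Haar probability measure on the unit circle in ℂ. -/
noncomputable def haarCircle : Measure ℂ :=
  (ENNReal.ofReal (2 * π))⁻¹ •
    Measure.map (fun θ : ℝ => Complex.exp (θ * Complex.I))
      (volume.restrict (Set.Ioc 0 (2 * π)))

/-- The standard semicircle distribution on [-2, 2]. -/
noncomputable def semicircle : Measure ℝ :=
  (volume.restrict (Set.Icc (-2 : ℝ) 2)).withDensity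
    (fun x => ENNReal.ofReal ((1 / (2 * π)) * Real.sqrt (4 - x ^ 2)))

/-!
Parametrize the circle by `u = exp (θ i)` with `θ ∈ (0, 2π]`: then `2 Re u = 2 cos θ` and
`α u = 2 sin² θ`. On each of `(0, π)` and `(π, 2π)` the map `θ ↦ 2 cos θ` is a bijection onto
`(-2, 2)` with `|d(2 cos θ)/dθ| = 2 |sin θ|`, and `2 sin² θ = 2 |sin θ| · √(4 - (2 cos θ)²) / 2`.
By the one-dimensional change of variables each half therefore pushes forward to the density
`√(4 - x²) / 2` on `(-2, 2)`; the two halves together with the factor `1 / (2π)` of the Haar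
measure give the semicircle density.
-/

open Set
open scoped ENNReal

lemma map_withDensity_comp {α β : Type*} [MeasurableSpace α] [MeasurableSpace β]
    (μ : Measure α) {e : α → β} (he : Measurable e) {g : β → ℝ≥0∞} (hg : Measurable g) :
    Measure.map e (μ.withDensity fun a => g (e a)) = (Measure.map e μ).withDensity g := by
  ext s hs
  rw [withDensity_apply _ hs, Measure.map_apply he hs, withDensity_apply _ (he hs),
    setLIntegral_map hs hg he]

theorem map_restrict_withDensity_abs_deriv_mul {s : Set ℝ} {f f' : ℝ → ℝ} (hs : MeasurableSet s)
    (hf' : ∀ x ∈ s, HasDerivWithinAt f (f' x) s x) (hf : InjOn f s) (hfm : Measurable f)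
    (g : ℝ → ℝ≥0∞) :
    Measure.map f ((volume.restrict s).withDensity fun x => ENNReal.ofReal |f' x| * g (f x)) =
      (volume.restrict (f '' s)).withDensity g := by
  ext t ht
  have hst : MeasurableSet (f ⁻¹' t ∩ s) := (hfm ht).inter hs
  rw [Measure.map_apply hfm ht, withDensity_apply _ (hfm ht), withDensity_apply _ ht,
    Measure.restrict_restrict (hfm ht), Measure.restrict_restrict ht, ← image_preimage_inter,
    lintegral_image_eq_lintegral_abs_deriv_mul hst
      (fun x hx => (hf' x hx.2).mono inter_subset_right) (hf.mono inter_subset_right)]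

namespace Real

lemma strictAntiOn_two_cos : StrictAntiOn (fun θ => 2 * cos θ) (Icc 0 π) :=
  fun _ hx _ hy hxy => by simpa using strictAntiOn_cos hx hy hxy

lemma injOn_two_cos_Ioo_zero_pi : InjOn (fun θ => 2 * cos θ) (Ioo 0 π) :=
  strictAntiOn_two_cos.injOn.mono Ioo_subset_Icc_self

lemma image_two_cos_Ioo_zero_pi : (fun θ => 2 * cos θ) '' Ioo 0 π = Ioo (-2) 2 := by
  rw [ContinuousOn.image_Ioo_of_strictAntiOn pi_pos.le (by fun_prop) strictAntiOn_two_cos]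
  norm_num

lemma image_two_pi_sub_Ioo_zero_pi : (fun θ => 2 * π - θ) '' Ioo 0 π = Ioo π (2 * π) := by
  rw [image_const_sub_Ioo]
  congr 1 <;> ring

lemma two_cos_comp_two_pi_sub :
    (fun θ => 2 * cos θ) ∘ (fun θ => 2 * π - θ) = fun θ => 2 * cos θ := by
  ext θ
  simp [cos_two_pi_sub]

lemma image_two_cos_Ioo_pi_two_pi : (fun θ => 2 * cos θ) '' Ioo π (2 * π) = Ioo (-2) 2 := by
  rw [← image_two_pi_sub_Ioo_zero_pi, ← image_comp, two_cos_comp_two_pi_sub,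
    image_two_cos_Ioo_zero_pi]

lemma injOn_two_cos_Ioo_pi_two_pi : InjOn (fun θ => 2 * cos θ) (Ioo π (2 * π)) := by
  rw [← image_two_pi_sub_Ioo_zero_pi]
  refine InjOn.image_of_comp ?_
  rw [two_cos_comp_two_pi_sub]
  exact injOn_two_cos_Ioo_zero_pi

lemma two_sin_sq_eq_abs_mul_sqrt (θ : ℝ) :
    2 * sin θ ^ 2 = |-(2 * sin θ)| * (√(4 - (2 * cos θ) ^ 2) / 2) := by
  have h : 4 - (2 * cos θ) ^ 2 = (2 * sin θ) ^ 2 := by nlinarith [sin_sq_add_cos_sq θ]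
  rw [h, sqrt_sq_eq_abs, abs_neg, abs_mul, abs_two]
  nlinarith [sq_abs (sin θ)]

theorem map_two_cos_withDensity_two_sin_sq {s : Set ℝ} (hs : MeasurableSet s)
    (hinj : InjOn (fun θ => 2 * cos θ) s) :
    Measure.map (fun θ => 2 * cos θ)
        ((volume.restrict s).withDensity fun θ => ENNReal.ofReal (2 * sin θ ^ 2)) =
      (volume.restrict ((fun θ => 2 * cos θ) '' s)).withDensity
        fun x => ENNReal.ofReal (√(4 - x ^ 2) / 2) := by
  have hdens : (fun θ => ENNReal.ofReal (2 * sin θ ^ 2)) = fun θ =>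
      ENNReal.ofReal |-(2 * sin θ)| * ENNReal.ofReal (√(4 - (2 * cos θ) ^ 2) / 2) := by
    ext θ
    rw [two_sin_sq_eq_abs_mul_sqrt, ENNReal.ofReal_mul (abs_nonneg _)]
  rw [hdens]
  exact map_restrict_withDensity_abs_deriv_mul (f' := fun θ => -(2 * sin θ)) hs
    (fun θ _ => ((hasDerivAt_cos θ).const_mul 2).hasDerivWithinAt.congr_deriv (by ring)) hinj
    (by fun_prop) (fun x => ENNReal.ofReal (√(4 - x ^ 2) / 2))

theorem map_two_cos_restrict_Ioc_withDensity_two_sin_sq :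
    Measure.map (fun θ => 2 * cos θ)
        ((volume.restrict (Ioc 0 (2 * π))).withDensity fun θ => ENNReal.ofReal (2 * sin θ ^ 2)) =
      (volume.restrict (Icc (-2) 2)).withDensity fun x => ENNReal.ofReal √(4 - x ^ 2) := by
  have hsplit : volume.restrict (Ioc 0 (2 * π)) =
      volume.restrict (Ioo 0 π) + volume.restrict (Ioo π (2 * π)) := by
    rw [← Ioc_union_Ioc_eq_Ioc pi_pos.le (by linarith [pi_pos]),
      Measure.restrict_union (Ioc_disjoint_Ioc_of_le le_rfl) measurableSet_Ioc,
      Measure.restrict_congr_set Ioo_ae_eq_Ioc, Measure.restrict_congr_set Ioo_ae_eq_Ioc]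
  rw [hsplit, withDensity_add_measure, Measure.map_add _ _ (by fun_prop),
    map_two_cos_withDensity_two_sin_sq measurableSet_Ioo injOn_two_cos_Ioo_zero_pi,
    map_two_cos_withDensity_two_sin_sq measurableSet_Ioo injOn_two_cos_Ioo_pi_two_pi,
    image_two_cos_Ioo_zero_pi, image_two_cos_Ioo_pi_two_pi, ← withDensity_add_left (by fun_prop),
    Measure.restrict_congr_set Ioo_ae_eq_Icc]
  congr with x
  rw [Pi.add_apply, ← ENNReal.ofReal_add (by positivity) (by positivity), add_halves]

end Real

theorem map_two_re_haarCircle_withDensity :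
    Measure.map (fun u : ℂ => 2 * u.re)
        (haarCircle.withDensity fun u => ENNReal.ofReal (2 * u.im ^ 2)) =
      (ENNReal.ofReal (2 * π))⁻¹ • Measure.map (fun θ => 2 * Real.cos θ)
        ((volume.restrict (Ioc 0 (2 * π))).withDensity
          fun θ => ENNReal.ofReal (2 * Real.sin θ ^ 2)) := by
  have he : Measurable fun θ : ℝ => exp (θ * I) := by fun_prop
  rw [haarCircle, withDensity_smul_measure, ← map_withDensity_comp _ he (by fun_prop),
    Measure.map_smul, Measure.map_map (by fun_prop) he]
  simp only [Function.comp_def, exp_ofReal_mul_I_re, exp_ofReal_mul_I_im]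

theorem map_alpha_semicircle :
    Measure.map (fun u : ℂ => 2 * u.re)
      (haarCircle.withDensity (fun u => ENNReal.ofReal (2 * u.im ^ 2))) = semicircle := by
  have hc : (ENNReal.ofReal (2 * π))⁻¹ ≠ ∞ := ENNReal.inv_ne_top.2 (by positivity)
  rw [map_two_re_haarCircle_withDensity, Real.map_two_cos_restrict_Ioc_withDensity_two_sin_sq,
    ← withDensity_smul' _ _ hc, semicircle]
  congr with x
  rw [Pi.smul_apply, smul_eq_mul, ← ENNReal.ofReal_inv_of_pos (by positivity),
    ← ENNReal.ofReal_mul (by positivity), one_div]
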